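/- arXiv:0912.4486 — 5 statements merged into one kernel-verified Lean document; each statement's English description precedes it below -/
import Mathlib

section
/- Let H be a Hilbert space, P an orthogonal projection on H with complement P^⊥ = I − P, and V a bounded self-adjoint operator on H. Then for every ε > 0, in the sense of quadratic forms, P(V − ε|V|)P + P^⊥(V − ε^{-1}|V|)P^⊥ ≤ V ≤ P(V + ε|V|)P + P^⊥(V + ε^{-1}|V|)P^⊥. -/
/-!
Since `A² = V²` with `A ≥ 0`, uniqueness of the positive square root gives `A = |V|`, hence
`-A ≤ V ≤ A`. For a positive operator `T`, expanding `0 ≤ re ⟪T (ε x - y), ε x - y⟫` gives the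
weighted Cauchy–Schwarz bound `2 re ⟪T x, y⟫ ≤ ε re ⟪T x, x⟫ + ε⁻¹ re ⟪T y, y⟫`; applied to
`A + V` and `A - V` at `(x, ±y)` and added, it bounds `|2 re ⟪V x, y⟫|` by
`ε re ⟪A x, x⟫ + ε⁻¹ re ⟪A y, y⟫`. Splitting `ψ = P ψ + Q ψ`, the form of `V` is the sum of the
two diagonal forms and the cross term `2 re ⟪V (P ψ), Q ψ⟫`, to which this bound applies.
-/

open scoped InnerProductSpace

lemma IsSelfAdjoint.neg_le_and_le_of_mul_self_eq {B : Type*} [CStarAlgebra B] [PartialOrder B]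
    [StarOrderedRing B] {a b : B} (ha : IsSelfAdjoint a) (hb : 0 ≤ b) (h : b * b = a * a) :
    -b ≤ a ∧ a ≤ b := by
  obtain rfl : b = CFC.abs a := by
    rw [CFC.abs, ha.star_eq]; exact (CFC.sqrt_unique h hb).symm
  refine ⟨?_, ?_⟩
  · rw [neg_le_iff_add_nonneg', CFC.abs_add_self a]
    exact smul_nonneg zero_le_two (CFC.posPart_nonneg a)
  · rw [← sub_nonneg, CFC.abs_sub_self a]
    exact smul_nonneg zero_le_two (CFC.negPart_nonneg a)

section

variable {𝕜 E : Type*} [RCLike 𝕜] [NormedAddCommGroup E] [InnerProductSpace 𝕜 E]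

open RCLike

namespace LinearMap.IsSymmetric

lemma re_inner_comm_clm {T : E →L[𝕜] E} (hT : IsSymmetric (T : E →ₗ[𝕜] E)) (x y : E) :
    re ⟪T y, x⟫_𝕜 = re ⟪T x, y⟫_𝕜 := by
  rw [hT.apply_clm, ← inner_conj_symm, conj_re]

lemma re_inner_map_add_self_clm {T : E →L[𝕜] E} (hT : IsSymmetric (T : E →ₗ[𝕜] E)) (x y : E) :
    re ⟪T (x + y), x + y⟫_𝕜 = re ⟪T x, x⟫_𝕜 + re ⟪T y, y⟫_𝕜 + 2 * re ⟪T x, y⟫_𝕜 := by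
  simp only [map_add, inner_add_left, inner_add_right, hT.re_inner_comm_clm x y]
  ring

lemma inner_comp_comp_apply_self_clm {P : E →L[𝕜] E} (hP : IsSymmetric (P : E →ₗ[𝕜] E))
    (X : E →L[𝕜] E) (x : E) : ⟪(P ∘L X ∘L P) x, x⟫_𝕜 = ⟪X (P x), P x⟫_𝕜 :=
  hP.apply_clm _ _

end LinearMap.IsSymmetric

namespace ContinuousLinearMap

lemma IsPositive.two_mul_re_inner_le {T : E →L[𝕜] E} (hT : T.IsPositive) {ε : ℝ} (hε : 0 < ε)
    (x y : E) : 2 * re ⟪T x, y⟫_𝕜 ≤ ε * re ⟪T x, x⟫_𝕜 + ε⁻¹ * re ⟪T y, y⟫_𝕜 := by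
  have hnonneg := hT.re_inner_nonneg_left ((ε : 𝕜) • x - y)
  simp only [map_sub, map_smul, inner_sub_left, inner_sub_right, inner_smul_left,
    inner_smul_right, conj_ofReal, re_ofReal_mul, hT.isSymmetric.re_inner_comm_clm x y]
    at hnonneg
  refine le_of_mul_le_mul_left ?_ hε
  rw [mul_add, ← mul_assoc, mul_inv_cancel_left₀ hε.ne']
  linarith

lemma two_mul_abs_re_inner_le {V A : E →L[𝕜] E} (hlow : -A ≤ V) (hup : V ≤ A) {ε : ℝ}
    (hε : 0 < ε) (x y : E) :
    |2 * re ⟪V x, y⟫_𝕜| ≤ ε * re ⟪A x, x⟫_𝕜 + ε⁻¹ * re ⟪A y, y⟫_𝕜 := by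
  rw [le_def, sub_neg_eq_add, add_comm] at hlow
  rw [le_def] at hup
  have h₁ := hlow.two_mul_re_inner_le hε x y
  have h₂ := hlow.two_mul_re_inner_le hε x (-y)
  have h₃ := hup.two_mul_re_inner_le hε x y
  have h₄ := hup.two_mul_re_inner_le hε x (-y)
  simp only [add_apply, sub_apply, map_neg, inner_add_left, inner_sub_left, inner_neg_left,
    inner_neg_right, neg_neg, map_add, map_sub] at h₁ h₂ h₃ h₄
  rw [abs_le]
  constructor <;> linarith

end ContinuousLinearMap

end

theorem stmt5_general {H : Type*} [NormedAddCommGroup H] [InnerProductSpace ℂ H] [CompleteSpace H]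
    (V A P : H →L[ℂ] H)
    (hV : IsSelfAdjoint V)
    (hA : IsSelfAdjoint A) (hApos : ∀ ψ : H, 0 ≤ (⟪A ψ, ψ⟫_ℂ).re)
    (hAabs : A ∘L A = V ∘L V)
    (hP : IsSelfAdjoint P)
    (ε : ℝ) (hε : 0 < ε) :
    let Q := ContinuousLinearMap.id ℂ H - P
    (∀ ψ : H,
        (⟪(P ∘L ((V - (ε : ℂ) • A) ∘L P) + Q ∘L ((V - ((ε : ℂ)⁻¹) • A) ∘L Q)) ψ, ψ⟫_ℂ).re
          ≤ (⟪V ψ, ψ⟫_ℂ).re) ∧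
    (∀ ψ : H,
        (⟪V ψ, ψ⟫_ℂ).re
          ≤ (⟪(P ∘L ((V + (ε : ℂ) • A) ∘L P) + Q ∘L ((V + ((ε : ℂ)⁻¹) • A) ∘L Q)) ψ, ψ⟫_ℂ).re) := by
  intro Q
  have hA₀ : 0 ≤ A := (ContinuousLinearMap.nonneg_iff_isPositive A).2
    (ContinuousLinearMap.isPositive_def'.2 ⟨hA, hApos⟩)
  obtain ⟨hlow, hup⟩ := hV.neg_le_and_le_of_mul_self_eq hA₀ hAabs
  have hQ : IsSelfAdjoint Q := (IsSelfAdjoint.one _).sub hP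
  have hcross (ψ : H) :=
    abs_le.mp (ContinuousLinearMap.two_mul_abs_re_inner_le hlow hup hε (P ψ) (Q ψ))
  have hsplit (ψ : H) := hV.isSymmetric.re_inner_map_add_self_clm (P ψ) (Q ψ)
  have hPQ (ψ : H) : P ψ + Q ψ = ψ := by simp [Q]
  simp only [hPQ, RCLike.re_to_complex] at hcross hsplit
  refine ⟨fun ψ => ?_, fun ψ => ?_⟩ <;>
  simp only [add_apply, sub_apply, smul_apply, inner_add_left, inner_sub_left, inner_smul_left,
    hP.isSymmetric.inner_comp_comp_apply_self_clm, hQ.isSymmetric.inner_comp_comp_apply_self_clm,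
    ← Complex.ofReal_inv, Complex.conj_ofReal, Complex.add_re, Complex.sub_re,
    Complex.re_ofReal_mul, hsplit ψ] <;>
  linarith [hcross ψ]

/-- Lemma 4.2 of the paper: if `P` is an orthogonal projection with complement
`Q = 1 - P`, `V` is bounded self-adjoint, and `A` is the operator absolute value `|V|`
(the unique positive self-adjoint operator with `A² = V²`), then in the quadratic form
sense `P(V - ε A)P + Q(V - ε⁻¹ A)Q ≤ V ≤ P(V + ε A)P + Q(V + ε⁻¹ A)Q`. -/
theorem stmt5 {H : Type*} [NormedAddCommGroup H] [InnerProductSpace ℂ H] [CompleteSpace H]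
    (V A P : H →L[ℂ] H)
    (hV : IsSelfAdjoint V)
    (hA : IsSelfAdjoint A) (hApos : ∀ ψ : H, 0 ≤ (⟪A ψ, ψ⟫_ℂ).re)
    (hAabs : A ∘L A = V ∘L V)
    (hP : IsSelfAdjoint P) (hProj : P ∘L P = P)
    (ε : ℝ) (hε : 0 < ε) :
    let Q := ContinuousLinearMap.id ℂ H - P
    (∀ ψ : H,
        (⟪(P ∘L ((V - (ε : ℂ) • A) ∘L P) + Q ∘L ((V - ((ε : ℂ)⁻¹) • A) ∘L Q)) ψ, ψ⟫_ℂ).re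
          ≤ (⟪V ψ, ψ⟫_ℂ).re) ∧
    (∀ ψ : H,
        (⟪V ψ, ψ⟫_ℂ).re
          ≤ (⟪(P ∘L ((V + (ε : ℂ) • A) ∘L P) + Q ∘L ((V + ((ε : ℂ)⁻¹) • A) ∘L Q)) ψ, ψ⟫_ℂ).re) :=
  stmt5_general V A P hV hA hApos hAabs hP ε hε
end

section
/- Let Ω₊, Ω₋ ⊂ ℂ be compact sets of positive measure and suppose there exists a polynomial p ≢ 0 of degree m with sup_{Ω₋}|p(z)| ≤ γ · inf_{Ω₊}|p(z)| where γ² = a₁/a₂ for given 0 < a₁ < a₂. Then for all n, the number of eigenvalues of A_n^+ in the interval (a₁, a₂) is at most m. -/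
/-!
Diagonalise `A n` in an orthonormal eigenbasis for the `L²(Ω₊)` inner product and let `L₋`, `L₊`
be the spans of the eigenvectors with eigenvalue `< a₂`, resp. `> a₁`; their dimensions add up to
`n + 1` plus the number of eigenvalues in `(a₁, a₂)`. On `L₋` the Rayleigh quotient
`‖f‖²_{Ω₋} / ‖f‖²_{Ω₊}` is at most `a₂`, and the separation property of `p` turns this into the
bound `a₁` for the quotient of `p f`, while on `L₊ \ {0}` the quotient exceeds `a₁`. Hence `p L₋`
and `L₊` are independent subspaces of the polynomials of degree `≤ n + m`, `m = deg p`, so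
`dim L₋ + dim L₊ ≤ n + m + 1`.
-/

open MeasureTheory Polynomial

/-- Number of eigenvalues (counted with eigenspace multiplicity) of an endomorphism in
a set `S` of real numbers. -/
noncomputable def eigCount {E : Type*} [AddCommGroup E] [Module ℂ E]
    (T : Module.End ℂ E) (S : Set ℝ) : ℕ :=
  ∑ᶠ μ ∈ S, Module.finrank ℂ (T.eigenspace (μ : ℂ))

open Module Finset InnerProductSpace

namespace LinearMap.IsSymmetric

section RCLike

variable {𝕜 E : Type*} [RCLike 𝕜] [NormedAddCommGroup E] [InnerProductSpace 𝕜 E]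
  [FiniteDimensional 𝕜 E] {T : E →ₗ[𝕜] E} (hT : T.IsSymmetric)

/-- `Ran E(S; T)`, the sum of the eigenspaces for eigenvalues in `S`; spanning it by a fixed
orthonormal eigenbasis lets dimensions and Rayleigh quotients be read off coordinates. -/
noncomputable def spectralSubspace (S : Set ℝ) : Submodule 𝕜 E :=
  Submodule.span 𝕜 (hT.eigenvectorBasis rfl '' {i | hT.eigenvalues rfl i ∈ S})

open scoped Classical in
theorem finrank_spectralSubspace (S : Set ℝ) :
    finrank 𝕜 (hT.spectralSubspace S) = #{i | hT.eigenvalues rfl i ∈ S} := by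
  rw [spectralSubspace, Set.image_eq_range, finrank_span_eq_card, Fintype.card_subtype]
  · rfl
  · exact (hT.eigenvectorBasis rfl).orthonormal.linearIndependent.comp _ Subtype.val_injective

theorem repr_eq_zero_of_mem_spectralSubspace {S : Set ℝ} {x : E}
    (hx : x ∈ hT.spectralSubspace S) {i : Fin (finrank 𝕜 E)} (hi : hT.eigenvalues rfl i ∉ S) :
    (hT.eigenvectorBasis rfl).repr x i = 0 := by
  rw [OrthonormalBasis.repr_apply_apply]
  induction hx using Submodule.span_induction with
  | mem y hy =>
    obtain ⟨j, hj, rfl⟩ := hy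
    exact (hT.eigenvectorBasis rfl).orthonormal.inner_eq_zero (by rintro rfl; exact hi hj)
  | zero => exact inner_zero_right _
  | add y z _ _ hy hz => rw [inner_add_right, hy, hz, add_zero]
  | smul c y _ hy => rw [inner_smul_right, hy, mul_zero]

theorem re_inner_apply_self_eq_sum (x : E) :
    RCLike.re ⟪T x, x⟫_𝕜 =
      ∑ i, hT.eigenvalues rfl i * ‖(hT.eigenvectorBasis rfl).repr x i‖ ^ 2 := by
  rw [← (hT.eigenvectorBasis rfl).repr.inner_map_map, PiLp.inner_apply, map_sum]
  refine sum_congr rfl fun i _ => ?_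
  rw [hT.eigenvectorBasis_apply_self_apply, RCLike.inner_apply, (starRingEnd 𝕜).map_mul,
    RCLike.conj_ofReal, mul_left_comm, RCLike.mul_conj, ← RCLike.ofReal_pow,
    RCLike.re_ofReal_mul, RCLike.ofReal_re]

theorem norm_sq_eq_sum (x : E) :
    ‖x‖ ^ 2 = ∑ i, ‖(hT.eigenvectorBasis rfl).repr x i‖ ^ 2 := by
  rw [← (hT.eigenvectorBasis rfl).repr.norm_map, EuclideanSpace.norm_sq_eq]

theorem re_inner_apply_self_le {S : Set ℝ} {a : ℝ} (hS : S ⊆ Set.Iic a) {x : E}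
    (hx : x ∈ hT.spectralSubspace S) : RCLike.re ⟪T x, x⟫_𝕜 ≤ a * ‖x‖ ^ 2 := by
  rw [hT.re_inner_apply_self_eq_sum, hT.norm_sq_eq_sum, mul_sum]
  refine sum_le_sum fun i _ => ?_
  by_cases hi : hT.eigenvalues rfl i ∈ S
  · exact mul_le_mul_of_nonneg_right (hS hi) (sq_nonneg _)
  · simp [hT.repr_eq_zero_of_mem_spectralSubspace hx hi]

theorem lt_re_inner_apply_self {S : Set ℝ} {a : ℝ} (hS : S ⊆ Set.Ioi a) {x : E}
    (hx : x ∈ hT.spectralSubspace S) (hx0 : x ≠ 0) : a * ‖x‖ ^ 2 < RCLike.re ⟪T x, x⟫_𝕜 := by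
  obtain ⟨i, hi⟩ : ∃ i, (hT.eigenvectorBasis rfl).repr x i ≠ 0 := by
    by_contra! h
    exact hx0 ((hT.eigenvectorBasis rfl).repr.map_eq_zero_iff.mp (PiLp.ext h))
  have hiS : hT.eigenvalues rfl i ∈ S := by
    by_contra hiS
    exact hi (hT.repr_eq_zero_of_mem_spectralSubspace hx hiS)
  rw [hT.re_inner_apply_self_eq_sum, hT.norm_sq_eq_sum, mul_sum]
  refine sum_lt_sum (fun j _ => ?_) ⟨i, mem_univ _, ?_⟩
  · by_cases hj : hT.eigenvalues rfl j ∈ S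
    · exact mul_le_mul_of_nonneg_right (hS hj).le (sq_nonneg _)
    · simp [hT.repr_eq_zero_of_mem_spectralSubspace hx hj]
  · exact mul_lt_mul_of_pos_right (hS hiS) (by positivity)

end RCLike

variable {E : Type*} [NormedAddCommGroup E] [InnerProductSpace ℂ E]
  [FiniteDimensional ℂ E] {T : E →ₗ[ℂ] E} (hT : T.IsSymmetric)

open scoped Classical in
theorem eigCount_eq_card (S : Set ℝ) : eigCount T S = #{i | hT.eigenvalues rfl i ∈ S} := by
  have hfiber (μ : ℝ) :
      finrank ℂ (Module.End.eigenspace T (μ : ℂ)) = #{i | hT.eigenvalues rfl i = μ} := by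
    rw [← hT.card_filter_eigenvalues_eq rfl]
    congr 1
    ext i
    simp only [mem_filter, mem_univ, true_and]
    exact RCLike.ofReal_inj
  refine (finsum_mem_congr rfl fun μ _ => hfiber μ).trans ?_
  rw [card_eq_sum_card_image (hT.eigenvalues rfl), finsum_mem_eq_sum_of_inter_support_eq]
  · refine sum_congr rfl fun μ hμ => ?_
    obtain ⟨i, hi, rfl⟩ := mem_image.mp hμ
    congr 1
    ext j
    simp only [mem_filter, mem_univ, true_and] at hi ⊢
    exact ⟨fun h => ⟨h ▸ hi, h⟩, And.right⟩
  · ext μ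
    simp only [Set.mem_inter_iff, Function.mem_support, coe_image, coe_filter, Set.mem_image,
      Set.mem_ofPred_eq, ne_eq, card_eq_zero, filter_eq_empty_iff]
    aesop

open scoped Classical in
theorem finrank_spectralSubspace_add_finrank_spectralSubspace {S S' : Set ℝ}
    (hSS' : S ∪ S' = Set.univ) :
    finrank ℂ (hT.spectralSubspace S) + finrank ℂ (hT.spectralSubspace S') =
      eigCount T (S ∩ S') + finrank ℂ E := by
  rw [hT.eigCount_eq_card, hT.finrank_spectralSubspace, hT.finrank_spectralSubspace,
    ← card_union_add_card_inter, ← filter_or, ← filter_and, add_comm]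
  congr 1
  · simp only [Set.mem_inter_iff]
  · rw [filter_true_of_mem fun i _ => (Set.mem_union ..).mp (hSS' ▸ Set.mem_univ _), card_univ,
      Fintype.card_fin]

end LinearMap.IsSymmetric

namespace Polynomial

theorem finrank_degreeLT (R : Type*) [CommRing R] [Nontrivial R] (k : ℕ) :
    finrank R (degreeLT R k) = k := by
  rw [finrank_eq_card_basis (degreeLT.basis R k), Fintype.card_fin]

theorem mul_mem_degreeLT {R : Type*} [Semiring R] {p f : R[X]} {k : ℕ}
    (hf : f ∈ degreeLT R k) : p * f ∈ degreeLT R (p.natDegree + k) := by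
  rw [mem_degreeLT] at hf ⊢
  rcases eq_or_ne p 0 with rfl | hp
  · simp
  · push_cast
    exact (degree_mul_le p f).trans_lt
      (WithBot.add_lt_add_of_le_of_lt (degree_ne_bot.mpr hp) degree_le_natDegree hf)

noncomputable def degreeLT.mulLeft {R : Type*} [CommSemiring R] (p : R[X]) (k : ℕ) :
    degreeLT R k →ₗ[R] degreeLT R (p.natDegree + k) where
  toFun f := ⟨p * f, mul_mem_degreeLT f.2⟩
  map_add' f g := Subtype.ext (mul_add p f g)
  map_smul' c f := Subtype.ext (mul_smul_comm c p f)

@[simp]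
theorem degreeLT.coe_mulLeft {R : Type*} [CommSemiring R] (p : R[X]) (k : ℕ) (f : degreeLT R k) :
    (degreeLT.mulLeft p k f : R[X]) = p * f :=
  rfl

theorem degreeLT.mulLeft_injective {R : Type*} [CommRing R] [NoZeroDivisors R] {p : R[X]}
    (hp : p ≠ 0) (k : ℕ) : Function.Injective (degreeLT.mulLeft p k) :=
  fun _ _ h => Subtype.ext (mul_left_cancel₀ hp (congrArg Subtype.val h))

noncomputable def l2Inner (Ω : Set ℂ) (f g : ℂ[X]) : ℂ :=
  ∫ z in Ω, (starRingEnd ℂ) (f.eval z) * g.eval z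

noncomputable def l2NormSq (Ω : Set ℂ) (f : ℂ[X]) : ℝ :=
  ∫ z in Ω, ‖f.eval z‖ ^ 2

variable {Ω : Set ℂ}

theorem integrableOn_conj_eval_mul_eval (hΩ : IsCompact Ω) (f g : ℂ[X]) :
    IntegrableOn (fun z => (starRingEnd ℂ) (f.eval z) * g.eval z) Ω :=
  ContinuousOn.integrableOn_compact hΩ (by fun_prop)

theorem integrableOn_norm_eval_sq (hΩ : IsCompact Ω) (f : ℂ[X]) :
    IntegrableOn (fun z => ‖f.eval z‖ ^ 2) Ω :=
  ContinuousOn.integrableOn_compact hΩ (by fun_prop)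

theorem l2Inner_add_left (hΩ : IsCompact Ω) (f g h : ℂ[X]) :
    l2Inner Ω (f + g) h = l2Inner Ω f h + l2Inner Ω g h := by
  rw [l2Inner, l2Inner, l2Inner, ← integral_add (integrableOn_conj_eval_mul_eval hΩ f h)
    (integrableOn_conj_eval_mul_eval hΩ g h)]
  simp only [eval_add, map_add, add_mul]

theorem l2Inner_smul_left (c : ℂ) (f g : ℂ[X]) :
    l2Inner Ω (c • f) g = (starRingEnd ℂ) c * l2Inner Ω f g := by
  rw [l2Inner, l2Inner, ← integral_const_mul]
  simp only [eval_smul, smul_eq_mul, map_mul, mul_assoc]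

theorem conj_l2Inner (f g : ℂ[X]) : (starRingEnd ℂ) (l2Inner Ω f g) = l2Inner Ω g f := by
  rw [l2Inner, l2Inner, ← integral_conj]
  simp only [map_mul, Complex.conj_conj, mul_comm]

theorem l2Inner_self (f : ℂ[X]) : l2Inner Ω f f = l2NormSq Ω f := by
  rw [l2Inner, l2NormSq, ← integral_complex_ofReal]
  simp only [Complex.ofReal_pow, Complex.conj_mul']

theorem l2NormSq_nonneg (f : ℂ[X]) : 0 ≤ l2NormSq Ω f :=
  integral_nonneg fun _ => sq_nonneg _

theorem l2NormSq_pos (hΩ : IsCompact Ω) (hpos : 0 < volume Ω) {f : ℂ[X]} (hf : f ≠ 0) :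
    0 < l2NormSq Ω f := by
  rw [l2NormSq, setIntegral_pos_iff_support_of_nonneg_ae
    (Filter.Eventually.of_forall fun _ => sq_nonneg _) (integrableOn_norm_eval_sq hΩ f)]
  have hroots : volume {z | f.IsRoot z} = 0 := (f.finite_setOfPred_isRoot hf).measure_zero _
  calc 0 < volume Ω := hpos
    _ = volume (Ω \ {z | f.IsRoot z}) := (measure_sdiff_null hroots).symm
    _ ≤ volume (Function.support (fun z => ‖f.eval z‖ ^ 2) ∩ Ω) :=
      measure_mono fun z ⟨hzΩ, hz⟩ => ⟨by simpa using hz, hzΩ⟩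

noncomputable abbrev l2InnerCore (hΩ : IsCompact Ω) (hpos : 0 < volume Ω)
    (V : Submodule ℂ ℂ[X]) : InnerProductSpace.Core ℂ V where
  inner f g := l2Inner Ω f g
  conj_inner_symm f g := conj_l2Inner g f
  re_inner_nonneg f := by
    simpa [l2Inner_self] using l2NormSq_nonneg (Ω := Ω) f
  add_left f g h := l2Inner_add_left hΩ f g h
  smul_left f g c := l2Inner_smul_left c f g
  definite f hf := by
    by_contra hf0
    rw [l2Inner_self, Complex.ofReal_eq_zero] at hf
    exact (l2NormSq_pos hΩ hpos (f := f) (by simpa using hf0)).ne' hf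

theorem l2NormSq_mul_le (hΩ : IsCompact Ω) {p : ℂ[X]} {c : ℝ} (hp : ∀ z ∈ Ω, ‖p.eval z‖ ≤ c)
    (f : ℂ[X]) : l2NormSq Ω (p * f) ≤ c ^ 2 * l2NormSq Ω f := by
  rw [l2NormSq, l2NormSq, ← integral_const_mul]
  refine setIntegral_mono_on (integrableOn_norm_eval_sq hΩ _)
    ((integrableOn_norm_eval_sq hΩ f).const_mul _) hΩ.measurableSet fun z hz => ?_
  rw [eval_mul, norm_mul, mul_pow]
  exact mul_le_mul_of_nonneg_right (pow_le_pow_left₀ (norm_nonneg _) (hp z hz) 2) (sq_nonneg _)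

theorem le_l2NormSq_mul (hΩ : IsCompact Ω) {p : ℂ[X]} {c : ℝ} (hc : 0 ≤ c)
    (hp : ∀ z ∈ Ω, c ≤ ‖p.eval z‖) (f : ℂ[X]) : c ^ 2 * l2NormSq Ω f ≤ l2NormSq Ω (p * f) := by
  rw [l2NormSq, l2NormSq, ← integral_const_mul]
  refine setIntegral_mono_on ((integrableOn_norm_eval_sq hΩ f).const_mul _)
    (integrableOn_norm_eval_sq hΩ _) hΩ.measurableSet fun z hz => ?_
  rw [eval_mul, norm_mul, mul_pow]
  exact mul_le_mul_of_nonneg_right (pow_le_pow_left₀ hc (hp z hz) 2) (sq_nonneg _)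

theorem l2NormSq_mul_le_of_separated {Ωp Ωm : Set ℂ} (hcp : IsCompact Ωp) (hne : Ωp.Nonempty)
    (hcm : IsCompact Ωm) {p : ℂ[X]} {γ : ℝ}
    (hsep : ∀ z ∈ Ωm, ∀ w ∈ Ωp, ‖p.eval z‖ ≤ γ * ‖p.eval w‖) {a : ℝ} (ha : 0 ≤ a) {f : ℂ[X]}
    (hf : l2NormSq Ωm f ≤ a * l2NormSq Ωp f) :
    l2NormSq Ωm (p * f) ≤ γ ^ 2 * a * l2NormSq Ωp (p * f) := by
  obtain ⟨w, hw, hmin⟩ := hcp.exists_isMinOn hne p.continuous.norm.continuousOn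
  calc l2NormSq Ωm (p * f) ≤ (γ * ‖p.eval w‖) ^ 2 * l2NormSq Ωm f :=
        l2NormSq_mul_le hcm (fun z hz => hsep z hz w hw) f
    _ ≤ (γ * ‖p.eval w‖) ^ 2 * (a * l2NormSq Ωp f) := by gcongr
    _ = γ ^ 2 * a * (‖p.eval w‖ ^ 2 * l2NormSq Ωp f) := by ring
    _ ≤ γ ^ 2 * a * l2NormSq Ωp (p * f) := by
        gcongr
        exact le_l2NormSq_mul hcp (norm_nonneg _) (fun z hz => hmin hz) f

theorem exists_spectralSubspaces_of_l2Inner {Ωp Ωm : Set ℂ} (hcp : IsCompact Ωp)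
    (hposp : 0 < volume Ωp) {k : ℕ} (T : Module.End ℂ (degreeLT ℂ k))
    (hT : ∀ f g : degreeLT ℂ k, l2Inner Ωp (T f) g = l2Inner Ωm f g) {a₁ a₂ : ℝ} (h : a₁ < a₂) :
    ∃ L M : Submodule ℂ (degreeLT ℂ k),
      finrank ℂ L + finrank ℂ M = eigCount T (Set.Ioo a₁ a₂) + k ∧
      (∀ f ∈ L, l2NormSq Ωm f ≤ a₂ * l2NormSq Ωp f) ∧
      ∀ f ∈ M, f ≠ 0 → a₁ * l2NormSq Ωp f < l2NormSq Ωm f := by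
  let _ : NormedAddCommGroup (degreeLT ℂ k) := (l2InnerCore hcp hposp _).toNormedAddCommGroup
  let _ : InnerProductSpace ℂ (degreeLT ℂ k) := .ofCore (l2InnerCore hcp hposp _).toCore
  have hquad (f : degreeLT ℂ k) : RCLike.re ⟪T f, f⟫_ℂ = l2NormSq Ωm f := by
    change RCLike.re (l2Inner Ωp (T f) f) = _
    rw [hT, l2Inner_self]
    rfl
  have hnorm (f : degreeLT ℂ k) : ‖f‖ ^ 2 = l2NormSq Ωp f := by
    rw [norm_sq_eq_re_inner (𝕜 := ℂ)]
    change RCLike.re (l2Inner Ωp f f) = _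
    rw [l2Inner_self]
    rfl
  have hsymm : T.IsSymmetric := fun f g => by
    change l2Inner Ωp (T f) g = l2Inner Ωp f (T g)
    rw [hT, ← conj_l2Inner (f := T g), hT, conj_l2Inner]
  refine ⟨hsymm.spectralSubspace (Set.Iio a₂), hsymm.spectralSubspace (Set.Ioi a₁), ?_,
    fun f hf => ?_, fun f hf hf0 => ?_⟩
  · rw [hsymm.finrank_spectralSubspace_add_finrank_spectralSubspace (Set.Iio_union_Ioi_of_lt h),
      Set.Iio_inter_Ioi, finrank_degreeLT]
  · rw [← hquad, ← hnorm]
    exact hsymm.re_inner_apply_self_le Set.Iio_subset_Iic_self hf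
  · rw [← hquad, ← hnorm]
    exact hsymm.lt_re_inner_apply_self subset_rfl hf hf0

theorem finrank_add_finrank_le_of_separated {Ωp Ωm : Set ℂ} (hcp : IsCompact Ωp)
    (hne : Ωp.Nonempty) (hcm : IsCompact Ωm) {p : ℂ[X]} (hp : p ≠ 0) {γ : ℝ}
    (hsep : ∀ z ∈ Ωm, ∀ w ∈ Ωp, ‖p.eval z‖ ≤ γ * ‖p.eval w‖) {a₁ a₂ : ℝ} (ha₂ : 0 ≤ a₂)
    (hγ : γ ^ 2 * a₂ = a₁) {k : ℕ} {L M : Submodule ℂ (degreeLT ℂ k)}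
    (hL : ∀ f ∈ L, l2NormSq Ωm f ≤ a₂ * l2NormSq Ωp f)
    (hM : ∀ f ∈ M, f ≠ 0 → a₁ * l2NormSq Ωp f < l2NormSq Ωm f) :
    finrank ℂ L + finrank ℂ M ≤ p.natDegree + k := by
  let ι := Submodule.inclusion (degreeLT_mono (R := ℂ) (Nat.le_add_left k p.natDegree))
  have hdisj : Disjoint (L.map (degreeLT.mulLeft p k)) (M.map ι) := by
    rw [Submodule.disjoint_def]
    rintro _ ⟨f, hf, rfl⟩ ⟨g, hg, hfg⟩
    have hpf : p * (f : ℂ[X]) = g := by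
      rw [← degreeLT.coe_mulLeft, ← hfg, Submodule.coe_inclusion]
    obtain rfl : g = 0 := by
      by_contra hg0
      have := l2NormSq_mul_le_of_separated hcp hne hcm hsep ha₂ (hL f hf)
      rw [hγ, hpf] at this
      exact (hM g hg hg0).not_ge this
    rw [← hfg, map_zero]
  calc finrank ℂ L + finrank ℂ M
      = finrank ℂ (L.map (degreeLT.mulLeft p k)) + finrank ℂ (M.map ι) := by
        rw [(Submodule.equivMapOfInjective _ (degreeLT.mulLeft_injective hp k) L).finrank_eq,
          (Submodule.equivMapOfInjective ι (Submodule.inclusion_injective _) M).finrank_eq]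
    _ ≤ finrank ℂ (degreeLT ℂ (p.natDegree + k)) :=
        Submodule.finrank_add_finrank_le_of_disjoint hdisj
    _ = p.natDegree + k := finrank_degreeLT ℂ _

end Polynomial

theorem stmt8_general (Ωp Ωm : Set ℂ) (hcp : IsCompact Ωp) (hcm : IsCompact Ωm)
    (hposp : 0 < volume Ωp)
    (A : ∀ n : ℕ, Module.End ℂ (Polynomial.degreeLT ℂ (n + 1)))
    (hA : ∀ n : ℕ, ∀ p q : Polynomial.degreeLT ℂ (n + 1),
      (∫ z in Ωp, (starRingEnd ℂ) (((A n p : Polynomial ℂ)).eval z) * (q : Polynomial ℂ).eval z)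
        = ∫ z in Ωm, (starRingEnd ℂ) ((p : Polynomial ℂ).eval z) * (q : Polynomial ℂ).eval z)
    (a₁ a₂ : ℝ) (ha₁ : 0 < a₁) (ha₁₂ : a₁ < a₂)
    (γ : ℝ) (hγ : γ ^ 2 = a₁ / a₂)
    (p : Polynomial ℂ) (hp : p ≠ 0)
    (hsep : ∀ z ∈ Ωm, ∀ w ∈ Ωp, ‖p.eval z‖ ≤ γ * ‖p.eval w‖) :
    ∀ n : ℕ, eigCount (A n) (Set.Ioo a₁ a₂) ≤ p.natDegree := by
  intro n
  have ha₂ : 0 < a₂ := ha₁.trans ha₁₂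
  obtain ⟨L, M, hdim, hL, hM⟩ := exists_spectralSubspaces_of_l2Inner hcp hposp (A n) (hA n) ha₁₂
  have hle := finrank_add_finrank_le_of_separated hcp (nonempty_of_measure_ne_zero hposp.ne') hcm
    hp hsep ha₂.le (by rw [hγ, div_mul_cancel₀ _ ha₂.ne']) hL hM
  omega

/-- Lemma 3.1: let `Ωp, Ωm ⊂ ℂ` be compact sets of positive measure, and let `A n` be
the operator on polynomials of degree `≤ n` with the `L²(Ωp)` inner product whose
quadratic form is the `L²(Ωm)` norm. If there is a polynomial `p ≢ 0` with
`sup_{Ωm}|p| ≤ γ inf_{Ωp}|p|` where `γ² = a₁/a₂`, `0 < a₁ < a₂`, then for all `n`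
the number of eigenvalues of `A n` in `(a₁, a₂)` is at most `deg p`. -/
theorem stmt8 (Ωp Ωm : Set ℂ) (hcp : IsCompact Ωp) (hcm : IsCompact Ωm)
    (hposp : 0 < volume Ωp) (hposm : 0 < volume Ωm)
    (A : ∀ n : ℕ, Module.End ℂ (Polynomial.degreeLT ℂ (n + 1)))
    (hA : ∀ n : ℕ, ∀ p q : Polynomial.degreeLT ℂ (n + 1),
      (∫ z in Ωp, (starRingEnd ℂ) (((A n p : Polynomial ℂ)).eval z) * (q : Polynomial ℂ).eval z)
        = ∫ z in Ωm, (starRingEnd ℂ) ((p : Polynomial ℂ).eval z) * (q : Polynomial ℂ).eval z)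
    (a₁ a₂ : ℝ) (ha₁ : 0 < a₁) (ha₁₂ : a₁ < a₂)
    (γ : ℝ) (hγ : γ ^ 2 = a₁ / a₂)
    (p : Polynomial ℂ) (hp : p ≠ 0)
    (hsep : ∀ z ∈ Ωm, ∀ w ∈ Ωp, ‖p.eval z‖ ≤ γ * ‖p.eval w‖) :
    ∀ n : ℕ, eigCount (A n) (Set.Ioo a₁ a₂) ≤ p.natDegree :=
  stmt8_general Ωp Ωm hcp hcm hposp A hA a₁ a₂ ha₁ ha₁₂ γ hγ p hp hsep
end

section
/- Suppose λ_n^+(T_{V_+}) ≥ n^{-n} a^n and λ_m^+(T_{V_-}) ≤ m^{-m} b^m for all sufficiently large n, m, where a > b > 0, and suppose λ_{m+n-1}^+(T_{V_+}) ≤ λ_n^+(T_V) + λ_m^+(T_{V_-}) for all m, n. Then T_V has infinitely many positive eigenvalues; more precisely, for every sufficiently large m there exists n = n_m ≤ γ m / log m (for any fixed 0 < γ < log(a/b)) with λ_{n_m}^+(T_V) > 0, and n_m → ∞ can be arranged. -/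
/-!
A shift by a fixed `c ≥ 0` costs `x ↦ x^{-x} a^x` only a factor `e^{O(c log x)}`, since
`x log(1 + c/x) ≤ c`, whereas `a > b` gains a factor `(a/b)^x`. Hence for fixed `n ≥ 1` and
all large `m`,
`λ⁺_m(T₋) ≤ m^{-m} b^m < (m+n-1)^{-(m+n-1)} a^{m+n-1} ≤ λ⁺_{m+n-1}(T₊) ≤ λ⁺_n(T) + λ⁺_m(T₋)`,
so `λ⁺_n(T) > 0` for every `n ≥ 1`; the bound `n ≤ γ m / log m` is then met by `n = 1`.
-/

open scoped InnerProductSpace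

/-- The `k`-th positive eigenvalue (in decreasing order, with multiplicity) of a compact
self-adjoint operator, via the Courant–Fischer min-max principle; `0` if the operator
has fewer than `k` positive eigenvalues. -/
noncomputable def lamPlus {H : Type*} [NormedAddCommGroup H] [InnerProductSpace ℂ H]
    (A : H →L[ℂ] H) (k : ℕ) : ℝ :=
  max 0 (⨆ L : {L : Submodule ℂ H // Module.finrank ℂ L = k},
    ⨅ f : {f : H // f ∈ L.1 ∧ f ≠ 0}, (⟪A f.1, f.1⟫_ℂ).re / ‖f.1‖ ^ 2)

open Filter Asymptotics Real

lemma tendsto_mul_sub_mul_log_atTop {L : ℝ} (hL : 0 < L) (c : ℝ) :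
    Tendsto (fun x => L * x - c * log x) atTop atTop := by
  have hlin : Tendsto (fun x : ℝ => L * x) atTop atTop := tendsto_id.const_mul_atTop hL
  refine (IsLittleO.isEquivalent ?_).symm.tendsto_atTop hlin
  have hdiff : ((fun x => L * x - c * log x) - fun x => L * x) = fun x => -c * log x := by
    ext x; simp
  rw [hdiff]
  exact (isLittleO_log_id_atTop.const_mul_left (-c)).const_mul_right hL.ne'

lemma mul_log_add_sub_log_le {x : ℝ} (hx : 0 < x) {c : ℝ} (hxc : 0 < x + c) :
    x * (log (x + c) - log x) ≤ c := by
  have h := log_le_sub_one_of_pos (div_pos hxc hx)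
  rw [log_div hxc.ne' hx.ne'] at h
  calc x * (log (x + c) - log x) ≤ x * ((x + c) / x - 1) := by gcongr
    _ = c := by field_simp; ring

lemma rpow_neg_self_mul_rpow {x : ℝ} (hx : 0 < x) {t : ℝ} (ht : 0 < t) :
    x ^ (-x) * t ^ x = exp (x * log t - x * log x) := by
  rw [rpow_def_of_pos hx, rpow_def_of_pos ht, ← exp_add]
  ring_nf

lemma eventually_mul_sub_mul_log_lt {l l' : ℝ} (hl : l < l') {c : ℝ} (hc : 0 ≤ c) :
    ∀ᶠ x in atTop, x * l - x * log x < (x + c) * l' - (x + c) * log (x + c) := by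
  filter_upwards [(tendsto_mul_sub_mul_log_atTop (sub_pos.2 hl) c).eventually_gt_atTop
    (c * c + c - c * l'), eventually_ge_atTop 1] with x hgrowth hx
  have hx0 : 0 < x := by linarith
  have hshift := mul_log_add_sub_log_le hx0 (by linarith : 0 < x + c)
  have hmono : log x ≤ log (x + c) := log_le_log hx0 (by linarith)
  have hlog_shift : c * (log (x + c) - log x) ≤ c * c := by
    gcongr
    nlinarith
  linarith

lemma eventually_rpow_neg_self_mul_rpow_lt {a b : ℝ} (hb : 0 < b) (hab : b < a) {c : ℝ}
    (hc : 0 ≤ c) :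
    ∀ᶠ x : ℝ in atTop, x ^ (-x) * b ^ x < (x + c) ^ (-(x + c)) * a ^ (x + c) := by
  filter_upwards [eventually_mul_sub_mul_log_lt (log_lt_log hb hab) hc, eventually_gt_atTop 0]
    with x hlog hx
  rw [rpow_neg_self_mul_rpow hx hb, rpow_neg_self_mul_rpow (by linarith) (hb.trans hab)]
  exact exp_lt_exp.2 hlog

theorem pos_of_le_add_of_rpow_neg_self_bounds {f g h : ℕ → ℝ} {a b : ℝ} (hb : 0 < b)
    (hab : b < a) (hf : ∀ᶠ k : ℕ in atTop, (k : ℝ) ^ (-(k : ℝ)) * a ^ (k : ℝ) ≤ f k)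
    (hh : ∀ᶠ m : ℕ in atTop, h m ≤ (m : ℝ) ^ (-(m : ℝ)) * b ^ (m : ℝ))
    (hfgh : ∀ m n : ℕ, 1 ≤ m → 1 ≤ n → f (m + n - 1) ≤ g n + h m) {n : ℕ} (hn : 1 ≤ n) :
    0 < g n := by
  have hshift : Tendsto (fun m => m + n - 1) atTop atTop :=
    tendsto_atTop_mono (fun m => show m ≤ m + n - 1 by omega) tendsto_id
  obtain ⟨m, hm, hfm, hhm, hlt⟩ := (eventually_ge_atTop 1 |>.and <| hshift.eventually hf |>.and <|
    hh.and <| tendsto_natCast_atTop_atTop.eventually <|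
      eventually_rpow_neg_self_mul_rpow_lt hb hab (sub_nonneg.2 (Nat.one_le_cast.2 hn))).exists
  have hcast : ((m + n - 1 : ℕ) : ℝ) = m + (n - 1) := by
    rw [Nat.cast_sub (by omega)]; push_cast; ring
  rw [hcast] at hfm
  linarith [hfgh m n hm hn]

theorem stmt11_general {H : Type*} [NormedAddCommGroup H] [InnerProductSpace ℂ H]
    (T Tp Tm : H →L[ℂ] H)
    (a b : ℝ) (hb : 0 < b) (hab : b < a)
    (hlow : ∃ N : ℕ, ∀ n ≥ N, ((n : ℝ)) ^ (-(n : ℝ)) * a ^ (n : ℝ) ≤ lamPlus Tp n)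
    (hup : ∃ N : ℕ, ∀ m ≥ N, lamPlus Tm m ≤ ((m : ℝ)) ^ (-(m : ℝ)) * b ^ (m : ℝ))
    (hWeyl : ∀ m n : ℕ, 1 ≤ m → 1 ≤ n →
      lamPlus Tp (m + n - 1) ≤ lamPlus T n + lamPlus Tm m) :
    {n : ℕ | 0 < lamPlus T n}.Infinite ∧
    ∀ γ : ℝ, 0 < γ → γ < Real.log (a / b) →
      ∃ M : ℕ, ∀ m ≥ M, ∃ n : ℕ,
        1 ≤ n ∧ (n : ℝ) ≤ γ * m / Real.log m ∧ 0 < lamPlus T n := by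
  have hpos : ∀ n, 1 ≤ n → 0 < lamPlus T n := fun n hn =>
    pos_of_le_add_of_rpow_neg_self_bounds hb hab (eventually_atTop.2 hlow)
      (eventually_atTop.2 hup) hWeyl hn
  refine ⟨(Set.Ici_infinite 1).mono hpos, fun γ hγ _ => ?_⟩
  obtain ⟨M, hM⟩ := eventually_atTop.1 <| (eventually_ge_atTop 2).and <|
    tendsto_natCast_atTop_atTop.eventually <|
      (tendsto_mul_sub_mul_log_atTop hγ 1).eventually_gt_atTop 0
  refine ⟨M, fun m hm => ⟨1, le_rfl, ?_, hpos 1 le_rfl⟩⟩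
  obtain ⟨hm2, hlog⟩ := hM m hm
  have hlog_pos : 0 < log m := log_pos (by exact_mod_cast hm2)
  rw [Nat.cast_one, le_div_iff₀ hlog_pos]
  linarith

/-- Abstract form of the proof of Theorem 2.2: if `λ⁺_n(T₊) ≥ n^{-n}a^n` and
`λ⁺_m(T₋) ≤ m^{-m}b^m` for large `n, m`, with `a > b > 0`, and the Weyl inequality
`λ⁺_{m+n-1}(T₊) ≤ λ⁺_n(T) + λ⁺_m(T₋)` holds (with `T₊ = T + T₋`), then `T` has
infinitely many positive eigenvalues; in fact, for any fixed `0 < γ < log(a/b)` and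
every sufficiently large `m` there is `n = n_m` with `1 ≤ n ≤ γ m / log m` and
`λ⁺_{n_m}(T) > 0`, and `n_m → ∞` can be arranged. -/
theorem stmt11 {H : Type*} [NormedAddCommGroup H] [InnerProductSpace ℂ H] [CompleteSpace H]
    (T Tp Tm : H →L[ℂ] H)
    (hT : IsSelfAdjoint T) (hTp : IsSelfAdjoint Tp) (hTm : IsSelfAdjoint Tm)
    (hTc : IsCompactOperator T) (hTpc : IsCompactOperator Tp) (hTmc : IsCompactOperator Tm)
    (hsum : Tp = T + Tm)
    (a b : ℝ) (hb : 0 < b) (hab : b < a)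
    (hlow : ∃ N : ℕ, ∀ n ≥ N, ((n : ℝ)) ^ (-(n : ℝ)) * a ^ (n : ℝ) ≤ lamPlus Tp n)
    (hup : ∃ N : ℕ, ∀ m ≥ N, lamPlus Tm m ≤ ((m : ℝ)) ^ (-(m : ℝ)) * b ^ (m : ℝ))
    (hWeyl : ∀ m n : ℕ, 1 ≤ m → 1 ≤ n →
      lamPlus Tp (m + n - 1) ≤ lamPlus T n + lamPlus Tm m) :
    {n : ℕ | 0 < lamPlus T n}.Infinite ∧
    ∀ γ : ℝ, 0 < γ → γ < Real.log (a / b) →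
      ∃ M : ℕ, ∀ m ≥ M, ∃ n : ℕ,
        1 ≤ n ∧ (n : ℝ) ≤ γ * m / Real.log m ∧ 0 < lamPlus T n :=
  stmt11_general T Tp Tm a b hb hab hlow hup hWeyl
end

section
/- Let A be a compact self-adjoint nonnegative operator with eigenvalues s_1 ≥ s_2 ≥ ⋯ > 0. If log s_n = −n log n + O(n) as n → ∞, then the eigenvalue counting function satisfies N((λ,∞); A) = |log λ| / log|log λ| · (1 + o(1)) as λ → 0⁺. -/
/-! With `T = -log λ`, the count is `#{n ≥ 1 : -log s_n < T}`, and `-log s_n` lies between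
`n (log n - C)` and `n (log n + C)` for large `n`. For every `ε > 0` and all large `T`, each
`n ≤ (1 - ε) T / log T` has `n (log n + C) < T`, while each `n ≥ (1 + ε) T / log T` has
`n (log n - C) ≥ T`; so up to a bounded number of small indices the count lies between
`(1 ∓ ε) T / log T`. -/

open Filter
open scoped InnerProductSpace Topology

open Real

theorem tendsto_add_mul_div_log_mul_log_div (k c : ℝ) :
    Tendsto (fun T => (k + c * T / log T) * log T / T) atTop (𝓝 c) := by
  have hlog : Tendsto (fun T => log T / T) atTop (𝓝 0) :=
    isLittleO_log_id_atTop.tendsto_div_nhds_zero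
  have hc : Tendsto (fun T => k * (log T / T) + c) atTop (𝓝 c) := by
    simpa using (hlog.const_mul k).add_const c
  refine hc.congr' ?_
  filter_upwards [eventually_gt_atTop 1] with T hT
  have hlogT : log T ≠ 0 := (log_pos hT).ne'
  field_simp

theorem eventually_mul_log_add_lt (C : ℝ) {ε : ℝ} (hε : 0 < ε) :
    ∀ᶠ T in atTop, ∀ x : ℝ, 0 < x → x ≤ (1 - ε) * T / log T → x * (log x + C) < T := by
  filter_upwards [eventually_gt_atTop 0, tendsto_log_atTop.eventually_ge_atTop 1,
    tendsto_log_atTop.eventually_gt_atTop (|C| / ε)] with T hT hlogT hCT x hx hxT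
  have hlogT0 : 0 < log T := by linarith
  have hxT' : x * log T ≤ (1 - ε) * T := (le_div_iff₀ hlogT0).1 hxT
  have hxT1 : x * log T ≤ T := by nlinarith
  have hx_le_T : x ≤ T := by nlinarith
  have hCx : x * |C| < ε * T := by
    rw [div_lt_iff₀ hε] at hCT
    nlinarith
  calc x * (log x + C) ≤ x * (log T + |C|) :=
        mul_le_mul_of_nonneg_left (add_le_add (log_le_log hx hx_le_T) (le_abs_self C)) hx.le
    _ < T := by nlinarith

theorem eventually_le_mul_log_sub (C : ℝ) {ε : ℝ} (hε : 0 < ε) :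
    ∀ᶠ T in atTop, ∀ x : ℝ, (1 + ε) * T / log T ≤ x → T ≤ x * (log x - C) := by
  have hloglog : (fun T => log (log T) + C) =o[atTop] log :=
    (isLittleO_log_id_atTop.comp_tendsto tendsto_log_atTop).add
      (Asymptotics.isLittleO_const_left.2 (Or.inr (tendsto_abs_atTop_atTop.comp tendsto_log_atTop)))
  filter_upwards [eventually_gt_atTop 0, tendsto_log_atTop.eventually_gt_atTop 0,
    hloglog.bound (div_pos hε (by linarith : (0:ℝ) < 1 + ε))] with T hT hlogT hbound x hx
  set a := (1 + ε) * T / log T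
  have ha : 0 < a := by positivity
  have hloga : log a = log (1 + ε) + (log T - log (log T)) := by
    rw [log_div (by positivity) hlogT.ne', log_mul (by positivity) hT.ne']
    ring
  have hbound' : log (log T) + C ≤ ε / (1 + ε) * log T := by
    rw [norm_of_nonneg hlogT.le] at hbound
    exact (le_abs_self _).trans hbound
  have hgap : log T / (1 + ε) ≤ log x - C := by
    have h1 : 0 ≤ log (1 + ε) := log_nonneg (by linarith)
    have h2 : log a ≤ log x := log_le_log ha hx
    have h3 : log T / (1 + ε) = log T - ε / (1 + ε) * log T := by field_simp; ring
    linarith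
  calc T = a * (log T / (1 + ε)) := by simp only [a]; field_simp
    _ ≤ x * (log x - C) := mul_le_mul hx hgap (by positivity) (ha.le.trans hx)

section Counting

variable {P : ℕ → Prop} {g : ℕ → ℝ} {C : ℝ} {N : ℕ}

theorem eventually_setOf_lt_subset_Iio (hg : ∀ n ≥ N, |g n - n * log n| ≤ C * n)
    {ε : ℝ} (hε : 0 < ε) :
    ∀ᶠ T in atTop, {n | P n ∧ g n < T} ⊆ Set.Iio (N + ⌈(1 + ε) * T / log T⌉₊) := by
  filter_upwards [eventually_le_mul_log_sub C hε] with T hT n hn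
  by_contra! hKn
  rw [Set.mem_Iio, not_lt] at hKn
  have hNn : N ≤ n := le_of_add_le_left hKn
  have hlow := (abs_le.1 (hg n hNn)).1
  have := hT n ((Nat.le_ceil _).trans (by exact_mod_cast le_of_add_le_right hKn))
  linarith [hn.2]

theorem eventually_card_setOf_lt_le (hg : ∀ n ≥ N, |g n - n * log n| ≤ C * n)
    {ε : ℝ} (hε : 0 < ε) :
    ∀ᶠ T in atTop, (Nat.card {n | P n ∧ g n < T} : ℝ) ≤ N + 1 + (1 + ε) * T / log T := by
  filter_upwards [eventually_setOf_lt_subset_Iio (P := P) hg hε, eventually_gt_atTop 0,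
    tendsto_log_atTop.eventually_gt_atTop 0] with T hsub hT hlogT
  have hcard := (Nat.card_mono (Set.finite_Iio _) hsub).trans_eq
    (by rw [Nat.card_eq_fintype_card, Fintype.card_Iio, Nat.card_Iio])
  have hceil := Nat.ceil_lt_add_one (by positivity : 0 ≤ (1 + ε) * T / log T)
  have : (Nat.card {n | P n ∧ g n < T} : ℝ) ≤ N + ⌈(1 + ε) * T / log T⌉₊ := by
    exact_mod_cast hcard
  linarith

theorem eventually_le_card_setOf_lt (hg : ∀ n ≥ N, |g n - n * log n| ≤ C * n)
    (hP : ∀ n ≥ N, P n) (hN : 1 ≤ N) {ε : ℝ} (hε : 0 < ε) :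
    ∀ᶠ T in atTop, (1 - ε) * T / log T - N ≤ (Nat.card {n | P n ∧ g n < T} : ℝ) := by
  filter_upwards [eventually_setOf_lt_subset_Iio (P := P) hg one_pos,
    eventually_mul_log_add_lt C hε] with T hfin hT
  set b := (1 - ε) * T / log T
  have hsub : Set.Icc N ⌊b⌋₊ ⊆ {n | P n ∧ g n < T} := by
    rintro n ⟨hNn, hnb⟩
    have hn0 : (0 : ℝ) < n := by exact_mod_cast hN.trans hNn
    have hup := (abs_le.1 (hg n hNn)).2
    have := hT n hn0 ((Nat.le_floor_iff' (by omega)).1 hnb)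
    exact ⟨hP n hNn, by linarith⟩
  have hcard := (Nat.card_mono ((Set.finite_Iio _).subset hfin) hsub).trans_eq'
    (by rw [Nat.card_eq_fintype_card, Fintype.card_Icc, Nat.card_Icc])
  have hfloor := Nat.sub_one_lt_floor b
  have : (⌊b⌋₊ : ℝ) + 1 - N ≤ Nat.card {n | P n ∧ g n < T} :=
    sub_le_iff_le_add.2 (by exact_mod_cast tsub_le_iff_right.1 hcard)
  linarith

theorem tendsto_card_setOf_lt_mul_log_div (hP : ∀ᶠ n in atTop, P n)
    (hg : (fun n : ℕ => g n - n * log n) =O[atTop] (fun n : ℕ => (n : ℝ))) :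
    Tendsto (fun T => (Nat.card {n | P n ∧ g n < T} : ℝ) * log T / T) atTop (𝓝 1) := by
  obtain ⟨C, hC⟩ := hg.bound
  obtain ⟨N, hN⟩ := eventually_atTop.1 ((hC.and hP).and (eventually_ge_atTop 1))
  have hgN : ∀ n ≥ N, |g n - n * log n| ≤ C * n := fun n hn => by
    simpa using (hN n hn).1.1
  refine tendsto_order.2 ⟨fun a ha => ?_, fun b hb => ?_⟩
  · have hε : 0 < (1 - a) / 2 := by linarith
    filter_upwards [eventually_le_card_setOf_lt hgN (fun n hn => (hN n hn).1.2) (hN N le_rfl).2 hε,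
      (tendsto_add_mul_div_log_mul_log_div (-N) (1 - (1 - a) / 2)).eventually_const_lt
        (by linarith : a < 1 - (1 - a) / 2), eventually_gt_atTop 1] with T hcard hlt hT
    calc a < (-N + (1 - (1 - a) / 2) * T / log T) * log T / T := hlt
      _ ≤ _ := by gcongr; exacts [(log_pos hT).le, by linarith]
  · have hε : 0 < (b - 1) / 2 := by linarith
    filter_upwards [eventually_card_setOf_lt_le (P := P) hgN hε,
      (tendsto_add_mul_div_log_mul_log_div (N + 1) (1 + (b - 1) / 2)).eventually_lt_const
        (by linarith : 1 + (b - 1) / 2 < b), eventually_gt_atTop 1] with T hcard hlt hT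
    calc _ ≤ (N + 1 + (1 + (b - 1) / 2) * T / log T) * log T / T := by
          gcongr; exact (log_pos hT).le
      _ < b := hlt

end Counting

theorem stmt12_general {H : Type*} [NormedAddCommGroup H] [InnerProductSpace ℂ H]
    (A : H →L[ℂ] H)
    (hinf : ∀ n : ℕ, 1 ≤ n → 0 < lamPlus A n)
    (hasymp : ∃ C > (0 : ℝ), ∃ N : ℕ, ∀ n : ℕ, N ≤ n → 1 ≤ n →
      |Real.log (lamPlus A n) + (n : ℝ) * Real.log n| ≤ C * n) :
    Tendsto
      (fun lam : ℝ =>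
        (Nat.card {n : ℕ | 1 ≤ n ∧ lam < lamPlus A n} : ℝ)
          * Real.log |Real.log lam| / |Real.log lam|)
      (𝓝[>] (0 : ℝ)) (𝓝 1) := by
  obtain ⟨C, -, N, hN⟩ := hasymp
  have hg : (fun n : ℕ => -log (lamPlus A n) - n * log n) =O[atTop] (fun n : ℕ => (n : ℝ)) := by
    refine .of_bound C ?_
    filter_upwards [eventually_ge_atTop N, eventually_ge_atTop 1] with n hNn hn
    rw [Real.norm_natCast, Real.norm_eq_abs, ← abs_neg]
    convert hN n hNn hn using 2
    ring
  have hT : Tendsto (fun lam => -log lam) (𝓝[>] 0) atTop :=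
    tendsto_neg_atBot_atTop.comp tendsto_log_nhdsGT_zero
  refine ((tendsto_card_setOf_lt_mul_log_div (eventually_ge_atTop 1) hg).comp hT).congr' ?_
  filter_upwards [Ioo_mem_nhdsGT one_pos] with lam ⟨hlam0, hlam1⟩
  have hset : {n : ℕ | 1 ≤ n ∧ -log (lamPlus A n) < -log lam} =
      {n : ℕ | 1 ≤ n ∧ lam < lamPlus A n} := by
    ext n
    simp only [Set.mem_ofPred_eq, neg_lt_neg_iff, and_congr_right_iff]
    exact fun hn => log_lt_log_iff hlam0 (hinf n hn)
  simp only [Function.comp_apply, hset, abs_of_neg (log_neg hlam0 hlam1)]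

/-- If a compact nonnegative self-adjoint operator `A` has eigenvalues
`s_1 ≥ s_2 ≥ ⋯ > 0` with `log s_n = -n log n + O(n)`, then
`N((λ,∞); A) = |log λ|/log|log λ| · (1 + o(1))` as `λ → 0⁺`. -/
theorem stmt12 {H : Type*} [NormedAddCommGroup H] [InnerProductSpace ℂ H] [CompleteSpace H]
    (A : H →L[ℂ] H) (hA : IsSelfAdjoint A) (hAc : IsCompactOperator A)
    (hApos : ∀ ψ : H, 0 ≤ (⟪A ψ, ψ⟫_ℂ).re)
    (hinf : ∀ n : ℕ, 1 ≤ n → 0 < lamPlus A n)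
    (hasymp : ∃ C > (0 : ℝ), ∃ N : ℕ, ∀ n : ℕ, N ≤ n → 1 ≤ n →
      |Real.log (lamPlus A n) + (n : ℝ) * Real.log n| ≤ C * n) :
    Tendsto
      (fun lam : ℝ =>
        (Nat.card {n : ℕ | 1 ≤ n ∧ lam < lamPlus A n} : ℝ)
          * Real.log |Real.log lam| / |Real.log lam|)
      (𝓝[>] (0 : ℝ)) (𝓝 1) :=
  stmt12_general A hinf hasymp
end

section
/- Let (s_n) be a non-increasing sequence of positive reals such that e^{-n log n − αn} ≤ s_n ≤ e^{-n log n + αn} for some α > 0 and all sufficiently large n. Then the counting function N(λ) = #{n : s_n > λ} satisfies N(λ) · log N(λ) = |log λ|(1+o(1)) as λ → 0⁺, equivalently N(λ) = |log λ|/log|log λ| · (1+o(1)). -/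
/-! Write `k = N(λ)` and `L = -log λ`. Monotonicity gives `s (k + 1) ≤ λ < s k`, so the bounds on
`s` squeeze `L` between `k log k - α k` and `(k + 1) log (k + 1) + α (k + 1)`, both equivalent to
`k log k`; hence `L ~ k log k`. Taking logarithms, `log L ~ log k + log log k ~ log k`, and both
limits follow by multiplying these equivalences. -/

open Filter
open scoped Topology

open Asymptotics Real Set

section Asymptotics

variable {ι : Type*} {l : Filter ι}

theorem Asymptotics.IsEquivalent.of_le_of_le {a b u v : ι → ℝ} (ha : a ~[l] v) (hb : b ~[l] v)
    (hau : ∀ᶠ i in l, a i ≤ u i) (hub : ∀ᶠ i in l, u i ≤ b i) : u ~[l] v := by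
  refine IsLittleO.isEquivalent ?_
  have hbound : (u - v) =O[l] fun i => ‖a i - v i‖ + ‖b i - v i‖ := by
    refine IsBigO.of_norm_eventuallyLE ?_
    filter_upwards [hau, hub] with i hai hbi
    simp only [Pi.sub_apply, Real.norm_eq_abs]
    exact abs_le.2 ⟨by linarith [neg_abs_le (a i - v i), abs_nonneg (b i - v i)],
      by linarith [le_abs_self (b i - v i), abs_nonneg (a i - v i)]⟩
  exact hbound.trans_isLittleO (ha.isLittleO.norm_left.add hb.isLittleO.norm_left)

theorem isLittleO_id_mul_log : (fun x : ℝ => x) =o[atTop] fun x => x * log x := by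
  simpa using (isBigO_refl (fun x : ℝ => x) atTop).mul_isLittleO (isLittleO_const_log_atTop (c := 1))

theorem isEquivalent_mul_log_sub_mul (α : ℝ) :
    (fun x : ℝ => x * log x - α * x) ~[atTop] fun x => x * log x :=
  IsEquivalent.refl.sub_isLittleO (isLittleO_id_mul_log.const_mul_left α)

theorem isEquivalent_add_one_mul_log_add_one (α : ℝ) :
    (fun x : ℝ => (x + 1) * log (x + 1) + α * (x + 1)) ~[atTop] fun x => x * log x := by
  have hshift : (fun x : ℝ => x + 1) ~[atTop] fun x => x :=
    IsEquivalent.refl.add_const_of_norm_tendsto_atTop tendsto_norm_atTop_atTop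
  have hmul : (fun x : ℝ => (x + 1) * log (x + 1)) ~[atTop] fun x => x * log x :=
    hshift.mul (hshift.log tendsto_id)
  exact hmul.add_isLittleO ((hshift.isBigO.trans_isLittleO isLittleO_id_mul_log).const_mul_left α)

theorem isEquivalent_log_mul_log : (fun x : ℝ => log (x * log x)) ~[atTop] log := by
  have hloglog : (fun x => log (log x)) =o[atTop] log :=
    isLittleO_log_id_atTop.comp_tendsto tendsto_log_atTop
  refine (hloglog.add_isEquivalent IsEquivalent.refl).congr_left ?_
  filter_upwards [eventually_gt_atTop 1] with x hx
  rw [Pi.add_apply, log_mul (by positivity) (log_pos hx).ne', add_comm]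

theorem tendsto_mul_log_atTop : Tendsto (fun x : ℝ => x * log x) atTop atTop :=
  tendsto_id.atTop_mul_atTop₀ tendsto_log_atTop

theorem tendsto_exp_neg_mul_log_add_mul (α : ℝ) :
    Tendsto (fun x : ℝ => exp (-x * log x + α * x)) atTop (𝓝 0) := by
  have h := (isEquivalent_mul_log_sub_mul α).symm.tendsto_atTop tendsto_mul_log_atTop
  refine (tendsto_exp_atBot.comp (tendsto_neg_atTop_atBot.comp h)).congr fun x => ?_
  simp only [Function.comp_apply]
  ring_nf

theorem isEquivalent_mul_log_of_bounds {k : ι → ℕ} {L : ι → ℝ} (α : ℝ) (hk : Tendsto k l atTop)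
    (hlow : ∀ᶠ i in l, (k i : ℝ) * log (k i) - α * k i ≤ L i)
    (hup : ∀ᶠ i in l, L i ≤ ((k i : ℝ) + 1) * log ((k i : ℝ) + 1) + α * ((k i : ℝ) + 1)) :
    L ~[l] fun i => (k i : ℝ) * log (k i) := by
  have hk' := (tendsto_natCast_atTop_atTop (R := ℝ)).comp hk
  exact ((isEquivalent_mul_log_sub_mul α).comp_tendsto hk').of_le_of_le
    ((isEquivalent_add_one_mul_log_add_one α).comp_tendsto hk') hlow hup

theorem Asymptotics.IsEquivalent.tendsto_mul_log_div {k L : ι → ℝ}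
    (h : L ~[l] fun i => k i * Real.log (k i)) (hk : Tendsto k l atTop) :
    Tendsto (fun i => k i * Real.log (k i) / L i) l (𝓝 1) ∧
      Tendsto (fun i => k i * Real.log (L i) / L i) l (𝓝 1) := by
  have hklogk : Tendsto (fun i => k i * Real.log (k i)) l atTop := tendsto_mul_log_atTop.comp hk
  have hL : ∀ᶠ i in l, L i ≠ 0 := (h.symm.tendsto_atTop hklogk).eventually_ne_atTop 0
  have hlog : (fun i => Real.log (L i)) ~[l] fun i => Real.log (k i) :=
    (h.log hklogk).trans (isEquivalent_log_mul_log.comp_tendsto hk)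
  exact ⟨(isEquivalent_iff_tendsto_one hL).1 h.symm,
    (isEquivalent_iff_tendsto_one hL).1 ((IsEquivalent.refl.mul hlog).trans h.symm)⟩

end Asymptotics

section CountAbove

noncomputable def countAbove (s : ℕ → ℝ) (lam : ℝ) : ℕ := Nat.card {n : ℕ | 1 ≤ n ∧ lam < s n}

variable {s : ℕ → ℝ} {lam : ℝ}

theorem finite_setOf_lt_of_tendsto_zero (hs0 : Tendsto s atTop (𝓝 0)) (hlam : 0 < lam) :
    {n : ℕ | 1 ≤ n ∧ lam < s n}.Finite := by
  have hsmall : ∀ᶠ n in cofinite, s n < lam := by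
    rw [Nat.cofinite_eq_atTop]
    exact hs0.eventually (gt_mem_nhds hlam)
  exact (eventually_cofinite.1 hsmall).subset fun n hn => not_lt.2 hn.2.le

theorem setOf_lt_eq_Icc_countAbove (hs : AntitoneOn s (Ici 1))
    (hfin : {n : ℕ | 1 ≤ n ∧ lam < s n}.Finite) :
    {n : ℕ | 1 ≤ n ∧ lam < s n} = Icc 1 (countAbove s lam) := by
  set S := {n : ℕ | 1 ≤ n ∧ lam < s n}
  set k := sSup S with hk
  have hIcc : S = Icc 1 k := by
    ext n
    refine ⟨fun hn => ⟨hn.1, le_csSup hfin.bddAbove hn⟩, fun ⟨h1n, hnk⟩ => ?_⟩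
    have hne : S.Nonempty := by
      by_contra hempty
      rw [hk, not_nonempty_iff_eq_empty.1 hempty, csSup_empty] at hnk
      exact absurd (h1n.trans hnk) (by simp)
    have hmax := Nat.sSup_mem hne hfin.bddAbove
    exact ⟨h1n, hmax.2.trans_le (hs h1n (le_trans h1n hnk) hnk)⟩
  have hcard : countAbove s lam = k := by
    change Nat.card S = k
    rw [hIcc, Nat.card_coe_set_eq, ncard_Icc_nat, Nat.add_sub_cancel]
  rw [hcard, ← hIcc]

theorem tendsto_countAbove (hpos : ∀ n, 1 ≤ n → 0 < s n) (hs : AntitoneOn s (Ici 1))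
    (hs0 : Tendsto s atTop (𝓝 0)) : Tendsto (countAbove s) (𝓝[>] 0) atTop := by
  refine tendsto_atTop.2 fun n => ?_
  have hm : 0 < s (max n 1) := hpos _ (le_max_right n 1)
  filter_upwards [Ioo_mem_nhdsGT hm] with lam hlam
  have hmem : max n 1 ∈ {m : ℕ | 1 ≤ m ∧ lam < s m} := ⟨le_max_right n 1, hlam.2⟩
  rw [setOf_lt_eq_Icc_countAbove hs (finite_setOf_lt_of_tendsto_zero hs0 hlam.1)] at hmem
  exact (le_max_left n 1).trans hmem.2

theorem eventually_log_bounds_countAbove {f g : ℕ → ℝ} (hpos : ∀ n, 1 ≤ n → 0 < s n)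
    (hs : AntitoneOn s (Ici 1)) (hs0 : Tendsto s atTop (𝓝 0))
    (hfg : ∀ᶠ n in atTop, exp (g n) ≤ s n ∧ s n ≤ exp (f n)) :
    ∀ᶠ lam in 𝓝[>] 0, g (countAbove s lam + 1) ≤ log lam ∧ log lam ≤ f (countAbove s lam) := by
  have hN := tendsto_countAbove hpos hs hs0
  filter_upwards [self_mem_nhdsWithin, hN.eventually (hfg.and (eventually_ge_atTop 1)),
    ((tendsto_add_atTop_nat 1).comp hN).eventually hfg] with lam hlam ⟨hk, hk1⟩ hsucc
  have hIcc := setOf_lt_eq_Icc_countAbove hs (finite_setOf_lt_of_tendsto_zero hs0 hlam)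
  set k := countAbove s lam
  have hlt : lam < s k := (hIcc.symm ▸ ⟨hk1, le_rfl⟩ : k ∈ {n : ℕ | 1 ≤ n ∧ lam < s n}).2
  have hle : s (k + 1) ≤ lam := by
    by_contra! h
    have hmem : k + 1 ∈ {n : ℕ | 1 ≤ n ∧ lam < s n} := ⟨by omega, h⟩
    rw [hIcc] at hmem
    exact absurd hmem.2 (by omega)
  exact ⟨(le_log_iff_exp_le hlam).2 (hsucc.1.trans hle),
    (log_le_iff_le_exp hlam).2 (hlt.le.trans hk.2)⟩

end CountAbove

theorem stmt13_general (s : ℕ → ℝ) (hpos : ∀ n : ℕ, 1 ≤ n → 0 < s n)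
    (hmono : ∀ m n : ℕ, 1 ≤ m → m ≤ n → s n ≤ s m)
    (α : ℝ)
    (hbound : ∃ N : ℕ, ∀ n : ℕ, N ≤ n → 1 ≤ n →
      Real.exp (-(n : ℝ) * Real.log n - α * n) ≤ s n ∧
      s n ≤ Real.exp (-(n : ℝ) * Real.log n + α * n)) :
    Tendsto
      (fun lam : ℝ =>
        (Nat.card {n : ℕ | 1 ≤ n ∧ lam < s n} : ℝ)
          * Real.log (Nat.card {n : ℕ | 1 ≤ n ∧ lam < s n}) / |Real.log lam|)
      (𝓝[>] (0 : ℝ)) (𝓝 1) ∧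
    Tendsto
      (fun lam : ℝ =>
        (Nat.card {n : ℕ | 1 ≤ n ∧ lam < s n} : ℝ)
          * Real.log |Real.log lam| / |Real.log lam|)
      (𝓝[>] (0 : ℝ)) (𝓝 1) := by
  obtain ⟨N₀, hN₀⟩ := hbound
  have hs : AntitoneOn s (Ici 1) := fun m hm n _ hmn => hmono m n hm hmn
  have hexp : ∀ᶠ n : ℕ in atTop,
      exp (-(n : ℝ) * log n - α * n) ≤ s n ∧ s n ≤ exp (-(n : ℝ) * log n + α * n) :=
    eventually_atTop.2 ⟨max N₀ 1, fun n hn => hN₀ n (le_of_max_le_left hn) (le_of_max_le_right hn)⟩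
  have hs0 : Tendsto s atTop (𝓝 0) :=
    tendsto_of_tendsto_of_tendsto_of_le_of_le' tendsto_const_nhds
      ((tendsto_exp_neg_mul_log_add_mul α).comp tendsto_natCast_atTop_atTop)
      (eventually_atTop.2 ⟨1, fun n hn => (hpos n hn).le⟩) (hexp.mono fun _ h => h.2)
  have hN := tendsto_countAbove hpos hs hs0
  have hL : (fun lam => -log lam) ~[𝓝[>] 0]
      fun lam => (countAbove s lam : ℝ) * log (countAbove s lam) := by
    refine isEquivalent_mul_log_of_bounds α hN ?_ ?_ <;>
    · filter_upwards [eventually_log_bounds_countAbove hpos hs hs0 hexp] with lam h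
      push_cast at h
      linarith [h.1, h.2]
  have habs : ∀ᶠ lam in 𝓝[>] (0 : ℝ), |log lam| = -log lam := by
    filter_upwards [Ioo_mem_nhdsGT one_pos] with lam hlam using abs_of_neg (log_neg hlam.1 hlam.2)
  obtain ⟨hmain, hloglog⟩ := hL.tendsto_mul_log_div (tendsto_natCast_atTop_atTop.comp hN)
  exact ⟨hmain.congr' (habs.mono fun lam h => by dsimp only; rw [h]; rfl),
    hloglog.congr' (habs.mono fun lam h => by dsimp only; rw [h]; rfl)⟩

/-- Inversion of super-exponential decay: if `(s_n)_{n≥1}` is non-increasing, positive,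
with `e^{-n log n - αn} ≤ s_n ≤ e^{-n log n + αn}` for large `n`, then the counting
function `N(λ) = #{n ≥ 1 : s_n > λ}` satisfies `N(λ) log N(λ) = |log λ|(1+o(1))`,
equivalently `N(λ) = |log λ|/log|log λ| · (1+o(1))`, as `λ → 0⁺`. -/
theorem stmt13 (s : ℕ → ℝ) (hpos : ∀ n : ℕ, 1 ≤ n → 0 < s n)
    (hmono : ∀ m n : ℕ, 1 ≤ m → m ≤ n → s n ≤ s m)
    (α : ℝ) (hα : 0 < α)
    (hbound : ∃ N : ℕ, ∀ n : ℕ, N ≤ n → 1 ≤ n →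
      Real.exp (-(n : ℝ) * Real.log n - α * n) ≤ s n ∧
      s n ≤ Real.exp (-(n : ℝ) * Real.log n + α * n)) :
    Tendsto
      (fun lam : ℝ =>
        (Nat.card {n : ℕ | 1 ≤ n ∧ lam < s n} : ℝ)
          * Real.log (Nat.card {n : ℕ | 1 ≤ n ∧ lam < s n}) / |Real.log lam|)
      (𝓝[>] (0 : ℝ)) (𝓝 1) ∧
    Tendsto
      (fun lam : ℝ =>
        (Nat.card {n : ℕ | 1 ≤ n ∧ lam < s n} : ℝ)
          * Real.log |Real.log lam| / |Real.log lam|)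
      (𝓝[>] (0 : ℝ)) (𝓝 1) :=
  stmt13_general s hpos hmono α hbound
end
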